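/- In the single-buffer simulation game, if Duplicator has a winning strategy in the variant where she may consume any number of letters per round, then she also has a winning strategy in which she consumes at most one letter per round. -/

import Mathlib

open scoped Classical

/-- A Büchi automaton over alphabet `S`. -/
structure BA (S : Type) where
  Q : Type
  init : Q
  trans : Q → S → Q → Prop
  acc : Q → Prop

/-- The Büchi language of `A`: infinite words with a run from the initial state
visiting accepting states infinitely often. -/
def BA.Lang {S : Type} (A : BA S) : Set (ℕ → S) :=
  { w | ∃ ρ : ℕ → A.Q, ρ 0 = A.init ∧ (∀ n, A.trans (ρ n) (w n) (ρ (n+1))) ∧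
        ∀ n, ∃ m, n ≤ m ∧ A.acc (ρ m) }

/-- Single-buffer game: the configuration after Spoiler's move `(a, q')`:
 `a` is appended to the buffer. -/
def midCfg1 {S : Type} {QA QB : Type} (c : QA × List S × QB) (m : S × QA) :
    QA × List S × QB :=
  (m.2, c.2.1 ++ [m.1], c.2.2)

/-- Duplicator's move in the single-buffer game: skip (`none`) or consume the oldest
buffered letter along a matching transition to state `p'` (`some p'`). -/
noncomputable def dupApply1 {S : Type} (A B : BA S) :
    (A.Q × List S × B.Q) → Option B.Q → Option (A.Q × List S × B.Q)
  | c, none => some c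
  | c, some p' =>
    match c.2.1 with
    | [] => none
    | b :: γ => if B.trans c.2.2 b p' then some (c.1, γ, p') else none

/-- The configuration at the start of round `n` of the single-buffer game. -/
noncomputable def playCfg1 {S : Type} (A B : BA S)
    (sp : ℕ → S × A.Q) (dm : ℕ → Option B.Q) : ℕ → Option (A.Q × List S × B.Q)
  | 0 => some (A.init, [], B.init)
  | n+1 =>
    match playCfg1 A B sp dm n with
    | none => none
    | some c =>
      if A.trans c.1 (sp n).1 (sp n).2 then dupApply1 A B (midCfg1 c (sp n)) (dm n) else none

/-- Duplicator's winning condition for the single-buffer game with capacity `k`: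
the buffer never exceeds `k` (checked after her moves), and either Spoiler's run is
non-accepting, or Duplicator moves infinitely often and her run visits accepting
states infinitely often. -/
def Win1 {S : Type} (A B : BA S) (k : ℕ∞)
    (sp : ℕ → S × A.Q) (dm : ℕ → Option B.Q) : Prop :=
  (∀ n c, playCfg1 A B sp dm n = some c → (c.2.1.length : ℕ∞) ≤ k) ∧
  ((∃ N, ∀ n, N ≤ n → ¬ A.acc (sp n).2) ∨
    ((∀ n, ∃ m, n ≤ m ∧ dm m ≠ none) ∧ (∀ n, ∃ m, n ≤ m ∧ ∃ p ∈ dm m, B.acc p)))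

/-- Single-buffer simulation `A ⊑k B`: Duplicator has a winning strategy in the
single-buffer simulation game with buffer capacity `k` (`k = ⊤` is the unbounded
buffer). -/
def Sim1 {S : Type} (A B : BA S) (k : ℕ∞) : Prop :=
  ∃ dstrat : List ((S × A.Q) × Option B.Q) → (S × A.Q) → Option B.Q,
    ∀ sp dm, (∀ n, dm n = dstrat (List.ofFn fun i : Fin n => (sp i, dm i)) (sp n)) →
      (∀ n c, playCfg1 A B sp dm n = some c → A.trans c.1 (sp n).1 (sp n).2) →
      (∀ n, (playCfg1 A B sp dm n).isSome) ∧ Win1 A B k sp dm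
/-- Duplicator consumes a finite sequence of letters from the head of the single
buffer, along matching transitions given by the listed successor states. -/
noncomputable def dupApply1M {S : Type} (A B : BA S) :
    (A.Q × List S × B.Q) → List B.Q → Option (A.Q × List S × B.Q)
  | c, [] => some c
  | c, p' :: ps =>
    match c.2.1 with
    | [] => none
    | b :: γ =>
      if B.trans c.2.2 b p' then dupApply1M A B (c.1, γ, p') ps else none

/-- Configurations of the single-buffer game in the variant where Duplicator may
consume any number of letters per round. -/
noncomputable def playCfg1M {S : Type} (A B : BA S)
    (sp : ℕ → S × A.Q) (dm : ℕ → List B.Q) : ℕ → Option (A.Q × List S × B.Q)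
  | 0 => some (A.init, [], B.init)
  | n+1 =>
    match playCfg1M A B sp dm n with
    | none => none
    | some c =>
      if A.trans c.1 (sp n).1 (sp n).2 then dupApply1M A B (midCfg1 c (sp n)) (dm n) else none

/-- Single-buffer simulation in the variant where Duplicator may consume any number
of letters per round. -/
def Sim1M {S : Type} (A B : BA S) (k : ℕ∞) : Prop :=
  ∃ dstrat : List ((S × A.Q) × List B.Q) → (S × A.Q) → List B.Q,
    ∀ sp dm, (∀ n, dm n = dstrat (List.ofFn fun i : Fin n => (sp i, dm i)) (sp n)) →
      (∀ n c, playCfg1M A B sp dm n = some c → A.trans c.1 (sp n).1 (sp n).2) →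
      (∀ n, (playCfg1M A B sp dm n).isSome) ∧
      ((∀ n c, playCfg1M A B sp dm n = some c → (c.2.1.length : ℕ∞) ≤ k) ∧
       ((∃ N, ∀ n, N ≤ n → ¬ A.acc (sp n).2) ∨
         ((∀ n, ∃ m, n ≤ m ∧ dm m ≠ []) ∧ (∀ n, ∃ m, n ≤ m ∧ ∃ p ∈ dm m, B.acc p))))

/-!
Duplicator replays the multi-consumption strategy against the same Spoiler moves,
queues the transitions it prescribes, and performs them one per round. Her actual
configuration then differs from the simulated one exactly by the queued moves: they
share Spoiler's state, and consuming the queue from her buffer yields the simulated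
buffer. Whenever the queue empties the two configurations coincide, and while it is
non-empty she consumes one letter per round, so her buffer length stays at a value the
simulated buffer had. Every queued move is eventually performed, so moving infinitely
often and visiting accepting states infinitely often both transfer.
-/

section Serialization

variable {α β : Type*}

def respond (f : List (α × β) → α → β) (x : ℕ → α) (n : ℕ) : β :=
  f (List.ofFn fun i : Fin n => (x i, respond f x i)) (x n)

theorem respond_congr (f : List (α × β) → α → β) {x y : ℕ → α} {n : ℕ}
    (h : ∀ i ≤ n, x i = y i) : respond f x n = respond f y n := by
  induction n using Nat.strong_induction_on with
  | _ n ih =>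
    rw [respond, respond, h n le_rfl]
    congr 1
    exact List.ofFn_inj.mpr <| funext fun i =>
      Prod.ext (h i i.isLt.le) (ih i i.isLt fun j hj => h j (hj.trans i.isLt.le))

variable (d : ℕ → List β)

/-- Moves planned by `d` before round `n` that have not been performed yet, when at most
one move is performed per round. -/
def pendingMoves : ℕ → List β
  | 0 => []
  | n + 1 => (pendingMoves n ++ d n).tail

def serialMoves (n : ℕ) : Option β :=
  (pendingMoves d n ++ d n).head?

theorem serialMoves_toList_append_pendingMoves_succ (n : ℕ) :
    (serialMoves d n).toList ++ pendingMoves d (n + 1) = pendingMoves d n ++ d n := by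
  rw [serialMoves, pendingMoves]
  cases pendingMoves d n ++ d n <;> rfl

theorem serialMoves_isSome_of_pendingMoves_succ_ne_nil {n : ℕ}
    (h : pendingMoves d (n + 1) ≠ []) : (serialMoves d n).isSome := by
  rw [pendingMoves] at h
  rw [serialMoves]
  cases hL : pendingMoves d n ++ d n
  · simp [hL] at h
  · rfl

theorem pendingMoves_congr {d d' : ℕ → List β} {n : ℕ} (h : ∀ i < n, d i = d' i) :
    pendingMoves d n = pendingMoves d' n := by
  induction n with
  | zero => rfl
  | succ n ih =>
    rw [pendingMoves, pendingMoves, ih fun i hi => h i (hi.trans n.lt_succ_self),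
      h n n.lt_succ_self]

theorem serialMoves_congr {d d' : ℕ → List β} {n : ℕ} (h : ∀ i ≤ n, d i = d' i) :
    serialMoves d n = serialMoves d' n := by
  rw [serialMoves, serialMoves, pendingMoves_congr fun i hi => h i hi.le, h n le_rfl]

theorem serialMoves_add_of_getElem? {n j : ℕ} {b : β}
    (h : (pendingMoves d n ++ d n)[j]? = some b) :
    serialMoves d (n + j) = some b := by
  induction j generalizing n with
  | zero => rwa [serialMoves, List.head?_eq_getElem?]
  | succ j ih =>
    have hj : (pendingMoves d (n + 1))[j]? = some b := by
      rwa [pendingMoves, List.getElem?_tail]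
    rw [← Nat.add_assoc, Nat.add_right_comm]
    exact ih <| by
      rwa [List.getElem?_append_left (List.getElem?_eq_some_iff.mp hj).1]

theorem exists_ge_serialMoves_ne_none (h : ∀ n, ∃ m, n ≤ m ∧ d m ≠ []) (n : ℕ) :
    ∃ m, n ≤ m ∧ serialMoves d m ≠ none := by
  obtain ⟨m, hnm, hm⟩ := h n
  refine ⟨m, hnm, ?_⟩
  simp [serialMoves, hm]

theorem exists_ge_mem_serialMoves {P : β → Prop} (h : ∀ n, ∃ m, n ≤ m ∧ ∃ b ∈ d m, P b)
    (n : ℕ) : ∃ m, n ≤ m ∧ ∃ b ∈ serialMoves d m, P b := by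
  obtain ⟨m, hnm, b, hb, hPb⟩ := h n
  obtain ⟨j, hj, hjb⟩ := List.mem_iff_getElem.mp (List.mem_append_right (pendingMoves d m) hb)
  exact ⟨m + j, hnm.trans (Nat.le_add_right m j), b,
    serialMoves_add_of_getElem? d (by rw [List.getElem?_eq_getElem hj, hjb]), hPb⟩

/-- Replays `f` on the opponent's moves recorded in the history, followed by the current
move `a`. -/
def serialStrategy (f : List (α × List β) → α → List β) (hst : List (α × Option β))
    (a : α) : Option β :=
  serialMoves (respond f fun i => (hst.map Prod.fst).getD i a) hst.length

theorem eq_serialMoves_respond_of_serialStrategy (f : List (α × List β) → α → List β)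
    {x : ℕ → α} {y : ℕ → Option β}
    (h : ∀ n, y n = serialStrategy f (List.ofFn fun i : Fin n => (x i, y i)) (x n)) :
    y = serialMoves (respond f x) := by
  funext n
  rw [h n, serialStrategy, List.length_ofFn]
  refine serialMoves_congr fun i hi => respond_congr f fun j hj => ?_
  rcases (hj.trans hi).lt_or_eq with hjn | rfl
  · simp [List.getD_eq_getElem?_getD, hjn]
  · simp [List.getD_eq_getElem?_getD]

end Serialization

section Game

variable {S : Type} (A B : BA S)

theorem dupApply1_eq_dupApply1M (c : A.Q × List S × B.Q) (o : Option B.Q) :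
    dupApply1 A B c o = dupApply1M A B c o.toList := by
  rcases c with ⟨a, _ | ⟨b, γ⟩, p⟩ <;> cases o <;> simp [dupApply1, dupApply1M]

theorem playCfg1_eq_playCfg1M (sp : ℕ → S × A.Q) (dm : ℕ → Option B.Q) :
    playCfg1 A B sp dm = playCfg1M A B sp fun n => (dm n).toList := by
  funext n
  induction n with
  | zero => rfl
  | succ n ih => simp only [playCfg1, playCfg1M, ih, dupApply1_eq_dupApply1M]

theorem dupApply1M_cons_cons (a : A.Q) (b : S) (γ : List S) (p q : B.Q) (l : List B.Q) :
    dupApply1M A B (a, b :: γ, p) (q :: l) =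
      if B.trans p b q then dupApply1M A B (a, γ, q) l else none :=
  rfl

theorem dupApply1M_append (c : A.Q × List S × B.Q) (l₁ l₂ : List B.Q) :
    dupApply1M A B c (l₁ ++ l₂) = (dupApply1M A B c l₁).bind (dupApply1M A B · l₂) := by
  induction l₁ generalizing c with
  | nil => rfl
  | cons q l₁ ih =>
    rcases c with ⟨a, _ | ⟨b, γ⟩, p⟩
    · rfl
    · rw [List.cons_append, dupApply1M_cons_cons, dupApply1M_cons_cons]
      split_ifs
      · exact ih _
      · rfl

variable {A B}

theorem dupApply1M_fst {c c' : A.Q × List S × B.Q} {l : List B.Q}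
    (h : dupApply1M A B c l = some c') : c'.1 = c.1 := by
  induction l generalizing c with
  | nil => cases h; rfl
  | cons q l ih =>
    rcases c with ⟨a, _ | ⟨b, γ⟩, p⟩
    · cases h
    · rw [dupApply1M_cons_cons] at h
      split_ifs at h
      exact (ih h :)

theorem dupApply1M_length {c c' : A.Q × List S × B.Q} {l : List B.Q}
    (h : dupApply1M A B c l = some c') : c'.2.1.length + l.length = c.2.1.length := by
  induction l generalizing c with
  | nil => cases h; rfl
  | cons q l ih =>
    rcases c with ⟨a, _ | ⟨b, γ⟩, p⟩
    · cases h
    · rw [dupApply1M_cons_cons] at h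
      split_ifs at h
      simp [← ih h, Nat.add_assoc]

theorem dupApply1M_midCfg1 {c c' : A.Q × List S × B.Q} {l : List B.Q} (m : S × A.Q)
    (h : dupApply1M A B c l = some c') :
    dupApply1M A B (midCfg1 c m) l = some (midCfg1 c' m) := by
  induction l generalizing c with
  | nil => cases h; rfl
  | cons q l ih =>
    rcases c with ⟨a, _ | ⟨b, γ⟩, p⟩
    · cases h
    · rw [dupApply1M_cons_cons] at h
      split_ifs at h with hq
      rw [midCfg1, List.cons_append, dupApply1M_cons_cons, if_pos hq]
      exact ih h

theorem playCfg1M_succ_eq_some_iff {sp : ℕ → S × A.Q} {dm : ℕ → List B.Q} {n : ℕ}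
    {c' : A.Q × List S × B.Q} :
    playCfg1M A B sp dm (n + 1) = some c' ↔ ∃ c, playCfg1M A B sp dm n = some c ∧
      A.trans c.1 (sp n).1 (sp n).2 ∧ dupApply1M A B (midCfg1 c (sp n)) (dm n) = some c' := by
  rw [playCfg1M]
  cases playCfg1M A B sp dm n with
  | none => simp
  | some c => by_cases ht : A.trans c.1 (sp n).1 (sp n).2 <;> simp [ht]

variable (A B)

theorem exists_playCfg1M_serialMoves (sp : ℕ → S × A.Q) (dm : ℕ → List B.Q) {n : ℕ}
    {c' : A.Q × List S × B.Q} (h : playCfg1M A B sp dm n = some c') :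
    ∃ c, playCfg1M A B sp (fun n => (serialMoves dm n).toList) n = some c ∧
      dupApply1M A B c (pendingMoves dm n) = some c' := by
  induction n generalizing c' with
  | zero => exact ⟨c', h, by cases h; rfl⟩
  | succ n ih =>
    obtain ⟨c'₀, hc'₀, htrans, hstep⟩ := playCfg1M_succ_eq_some_iff.mp h
    obtain ⟨c₀, hc₀, hpending⟩ := ih hc'₀
    have hsplit : dupApply1M A B (midCfg1 c₀ (sp n))
        ((serialMoves dm n).toList ++ pendingMoves dm (n + 1)) = some c' := by
      rwa [serialMoves_toList_append_pendingMoves_succ, dupApply1M_append,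
        dupApply1M_midCfg1 _ hpending]
    rw [dupApply1M_append] at hsplit
    obtain ⟨c, hc, hrest⟩ := Option.bind_eq_some_iff.mp hsplit
    exact ⟨c, playCfg1M_succ_eq_some_iff.mpr ⟨c₀, hc₀, dupApply1M_fst hpending ▸ htrans, hc⟩,
      hrest⟩

/-- The serialized buffer grows only in rounds after which no moves are pending, and then it
equals the buffer of the original play. -/
theorem length_le_of_playCfg1M_serialMoves (sp : ℕ → S × A.Q) (dm : ℕ → List B.Q) (k : ℕ∞)
    (hsome : ∀ n, (playCfg1M A B sp dm n).isSome)
    (hk : ∀ n c, playCfg1M A B sp dm n = some c → (c.2.1.length : ℕ∞) ≤ k) {n : ℕ}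
    {c : A.Q × List S × B.Q}
    (h : playCfg1M A B sp (fun n => (serialMoves dm n).toList) n = some c) :
    (c.2.1.length : ℕ∞) ≤ k := by
  induction n generalizing c with
  | zero => cases h; simp
  | succ n ih =>
    by_cases hpending : pendingMoves dm (n + 1) = []
    · obtain ⟨c', hc'⟩ := Option.isSome_iff_exists.mp (hsome (n + 1))
      obtain ⟨c₁, hc₁, hrest⟩ := exists_playCfg1M_serialMoves A B sp dm hc'
      rw [h] at hc₁
      rw [hpending] at hrest
      cases hc₁
      cases hrest
      exact hk _ _ hc'
    · obtain ⟨c₀, hc₀, -, hstep⟩ := playCfg1M_succ_eq_some_iff.mp h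
      have hlen := dupApply1M_length hstep
      rw [Option.length_toList_eq_one_iff.mpr
        (serialMoves_isSome_of_pendingMoves_succ_ne_nil dm hpending)] at hlen
      simp only [midCfg1, List.length_append, List.length_singleton] at hlen
      have hkept : c.2.1.length = c₀.2.1.length := by omega
      exact hkept ▸ ih hc₀

end Game

/-- In the single-buffer simulation game, if Duplicator wins the
variant in which she may consume any number of letters per round, then she also wins
the standard game in which she consumes at most one letter per round. -/
theorem sim1_multi_consumption_no_extra_power {S : Type} (A B : BA S) (k : ℕ∞)
    (h : Sim1M A B k) : Sim1 A B k := by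
  obtain ⟨ds, hds⟩ := h
  refine ⟨serialStrategy ds, fun sp dm hdm hlegal => ?_⟩
  obtain rfl := eq_serialMoves_respond_of_serialStrategy ds hdm
  set d := respond ds sp
  rw [Win1, playCfg1_eq_playCfg1M] at *
  have hsim := @exists_playCfg1M_serialMoves S A B sp d
  have hlegal' : ∀ n c', playCfg1M A B sp d n = some c' → A.trans c'.1 (sp n).1 (sp n).2 := by
    intro n c' hc'
    obtain ⟨c, hc, hpending⟩ := hsim hc'
    exact dupApply1M_fst hpending ▸ hlegal n c hc
  obtain ⟨hsome, hk, hwin⟩ := hds sp d (fun n => respond.eq_1 ..) hlegal'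
  refine ⟨fun n => ?_, fun n c => length_le_of_playCfg1M_serialMoves A B sp d k hsome hk,
    hwin.imp id (And.imp (exists_ge_serialMoves_ne_none d) (exists_ge_mem_serialMoves d))⟩
  obtain ⟨c', hc'⟩ := Option.isSome_iff_exists.mp (hsome n)
  obtain ⟨c, hc, -⟩ := hsim hc'
  simp [hc]
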